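/- arXiv:1701.07811 — 2 statements merged into one kernel-verified Lean document; each statement's English description precedes it below -/
import Mathlib

section
/- If G is a finite simple graph without isolated vertices, then the total domination number of G is at least the sub-total domination number of G, i.e., γ_t(G) ≥ sub_t(G). -/
open Finset

/-- The sum of the degrees of the vertices in `S`. -/
noncomputable def degSum {V : Type*} (G : SimpleGraph V) (S : Finset V) : ℕ :=
  ∑ v ∈ S, (G.neighborSet v).ncard

/-- The sub-total domination number: the smallest `k` such that the sum of the `k` largest
degrees (equivalently, the largest degree sum over a `k`-subset of vertices) is at least `n`. -/
noncomputable def subt {V : Type*} (G : SimpleGraph V) [Fintype V] : ℕ :=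
  sInf {k | ∃ S : Finset V, S.card = k ∧ Fintype.card V ≤ degSum G S}

/-- The total domination number. -/
noncomputable def totalDomNum {V : Type*} (G : SimpleGraph V) [Fintype V] : ℕ :=
  sInf {k | ∃ S : Finset V, S.card = k ∧ ∀ v : V, ∃ u ∈ S, G.Adj v u}

/-- The maximum degree. -/
noncomputable def maxDeg {V : Type*} (G : SimpleGraph V) : ℕ :=
  ⨆ v, (G.neighborSet v).ncard

/-!
The open neighbourhoods of a total dominating set `S` cover `V`, so the degrees of the vertices
of `S` add up to at least `n`; taking `S` of minimum size gives `sub_t(G) ≤ |S| = γ_t(G)`.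
-/

section

variable {V : Type*} [Fintype V] (G : SimpleGraph V)

theorem degSum_eq_sum_card_neighborFinset [DecidableRel G.Adj] (S : Finset V) :
    degSum G S = ∑ v ∈ S, (G.neighborFinset v).card := by
  refine sum_congr rfl fun v _ => ?_
  rw [G.neighborFinset_def, Set.ncard_eq_toFinset_card']

theorem card_le_degSum_of_forall_exists_adj {S : Finset V} (hS : ∀ v, ∃ u ∈ S, G.Adj v u) :
    Fintype.card V ≤ degSum G S := by
  classical
  have hcover : (univ : Finset V) ⊆ S.biUnion fun u => G.neighborFinset u := fun v _ => by
    obtain ⟨u, huS, hvu⟩ := hS v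
    exact mem_biUnion.mpr ⟨u, huS, (G.mem_neighborFinset u v).mpr hvu.symm⟩
  calc Fintype.card V = (univ : Finset V).card := rfl
    _ ≤ (S.biUnion fun u => G.neighborFinset u).card := card_le_card hcover
    _ ≤ ∑ u ∈ S, (G.neighborFinset u).card := card_biUnion_le
    _ = degSum G S := (degSum_eq_sum_card_neighborFinset G S).symm

theorem exists_card_eq_totalDomNum (hfree : ∀ v : V, ∃ u : V, G.Adj v u) :
    ∃ S : Finset V, S.card = totalDomNum G ∧ ∀ v : V, ∃ u ∈ S, G.Adj v u := by
  have hdom : {k | ∃ S : Finset V, S.card = k ∧ ∀ v : V, ∃ u ∈ S, G.Adj v u}.Nonempty :=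
    ⟨_, univ, rfl, fun v => (hfree v).imp fun u hu => ⟨mem_univ u, hu⟩⟩
  exact Nat.sInf_mem hdom

end

theorem stmt_0 {V : Type*} [Fintype V] (G : SimpleGraph V)
    (hfree : ∀ v : V, ∃ u : V, G.Adj v u) :
    subt G ≤ totalDomNum G := by
  obtain ⟨S, hcard, hdom⟩ := exists_card_eq_totalDomNum G hfree
  exact Nat.sInf_le ⟨S, hcard, card_le_degSum_of_forall_exists_adj G hdom⟩
end

section
/- If G and H are disjoint isolate-free graphs, then sub_t(G) + sub_t(H) ≥ sub_t(G ∪ H), where G ∪ H denotes the disjoint union of G and H. -/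
open Finset

/-!
Take degree-sum witnesses `S` for `G` and `T` for `H` of sizes `sub_t(G)` and `sub_t(H)`; they
exist because an isolate-free graph has degree sum at least its order. Degrees in `G ∪ H` are the
degrees in the components, so `S ∪ T` has degree sum at least `n₁ + n₂`, whence
`sub_t(G ∪ H) ≤ |S| + |T|`.
-/

open SimpleGraph

section Subt

variable {V : Type*} [Fintype V] (G : SimpleGraph V)

lemma card_le_degSum_univ (hG : ∀ v : V, ∃ u : V, G.Adj v u) :
    Fintype.card V ≤ degSum G univ :=
  calc Fintype.card V = ∑ _v : V, 1 := by simp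
    _ ≤ degSum G univ := sum_le_sum fun v _ => (Set.ncard_pos (Set.toFinite _)).mpr (hG v)

lemma subt_le_card {S : Finset V} (hS : Fintype.card V ≤ degSum G S) : subt G ≤ S.card :=
  Nat.sInf_le ⟨S, rfl, hS⟩

lemma exists_card_eq_subt (hG : ∀ v : V, ∃ u : V, G.Adj v u) :
    ∃ S : Finset V, S.card = subt G ∧ Fintype.card V ≤ degSum G S :=
  Nat.sInf_mem (s := {k | ∃ S : Finset V, S.card = k ∧ Fintype.card V ≤ degSum G S})
    ⟨_, univ, rfl, card_le_degSum_univ G hG⟩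

end Subt

lemma degSum_sum_disjSum {V W : Type*} (G : SimpleGraph V) (H : SimpleGraph W)
    (S : Finset V) (T : Finset W) :
    degSum (G ⊕g H) (S.disjSum T) = degSum G S + degSum H T := by
  simp only [degSum, sum_disjSum, neighborSet_sum_inl, neighborSet_sum_inr,
    Set.ncard_image_of_injective _ Sum.inl_injective,
    Set.ncard_image_of_injective _ Sum.inr_injective]

theorem stmt_8 {V W : Type*} [Fintype V] [Fintype W]
    (G : SimpleGraph V) (H : SimpleGraph W)
    (hG : ∀ v : V, ∃ u : V, G.Adj v u) (hH : ∀ v : W, ∃ u : W, H.Adj v u) :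
    subt (G ⊕g H) ≤ subt G + subt H := by
  obtain ⟨S, hS, hSdeg⟩ := exists_card_eq_subt G hG
  obtain ⟨T, hT, hTdeg⟩ := exists_card_eq_subt H hH
  have hdeg : Fintype.card (V ⊕ W) ≤ degSum (G ⊕g H) (S.disjSum T) := by
    rw [degSum_sum_disjSum, Fintype.card_sum]
    exact Nat.add_le_add hSdeg hTdeg
  calc subt (G ⊕g H) ≤ (S.disjSum T).card := subt_le_card _ hdeg
    _ = subt G + subt H := by rw [card_disjSum, hS, hT]
end
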